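/- arXiv:1204.3909 — 2 statements merged into one kernel-verified Lean document; each statement's English description precedes it below -/
import Mathlib

section
/- Let φ : ℝ → ℝ be a C³, 2π-periodic solution of φ̈ + |φ|^{1/2}φ = 0 that is odd, satisfies φ(τ+π) = −φ(τ), and φ(τ) ≥ 0 on [0,π]. Define z : ℝ → ℝ as the 2π-periodic extension of z(τ) = (1/2π)(φ̇(0)(2τ+π) − 2πφ̇(τ)) for τ ∈ [−π,0] and z(τ) = (1/2π)φ̇(0)(2τ−π) for τ ∈ [0,π]. Then z is well-defined and of class C¹ on ℝ, ∫_{−π}^{π} z(τ)dτ = 0, and z is twice differentiable with z̈(τ) = V''(φ(τ))φ̇(τ) for all τ ∈ ℝ. -/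
open Real

/-- Second derivative of the Hertzian potential: `V''(x) = (3/2)(max(-x,0))^(1/2)`. -/
noncomputable def V'' (x : ℝ) : ℝ := (3/2) * (max (-x) 0) ^ ((1:ℝ)/2)

/-!
Write `c = φ̇(0)` and let `V'(x) = -(max (-x) 0)^(3/2)` be the Hertzian force, a primitive of `V''`.
Then `z₊(τ) = c (τ/π - 1/2) + ∫₀^τ V'(φ s) ds` satisfies `ż₊ = c/π + V'(φ)`, hence
`z̈₊ = V''(φ) φ̇`. On `[0, π]` we have `φ ≥ 0`, so `V'(φ) = 0`; on `[-π, 0]` we have `φ ≤ 0`, where the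
equation reads `φ̈ = -V'(φ)`, so integrals of `V'(φ)` are differences of values of `φ̇`. This gives
the two explicit formulas and, since `φ̇(-π) = -c` by antiperiodicity, `∫_{-π}^{π} V'(φ) = -2c`,
which cancels the growth `2c` of the linear part over a period. The mean vanishes because
`φ(-π) = φ(0)`.
-/

open Set Function intervalIntegral

theorem Function.Antiperiodic.deriv {𝕜 F : Type*} [NontriviallyNormedField 𝕜]
    [NormedAddCommGroup F] [NormedSpace 𝕜 F] {f : 𝕜 → F} {c : 𝕜} (h : Antiperiodic f c) :
    Antiperiodic (deriv f) c := fun x => by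
  rw [← deriv_comp_add_const, h.funext, deriv.neg]

theorem hasDerivAt_max_zero_rpow {p : ℝ} (hp : 1 < p) (x : ℝ) :
    HasDerivAt (fun y => max y 0 ^ p) (p * max x 0 ^ (p - 1)) x := by
  have hp0 : (0:ℝ) ^ p = 0 := zero_rpow (by linarith)
  have hp1 : (0:ℝ) ^ (p - 1) = 0 := zero_rpow (by linarith)
  rcases lt_trichotomy x 0 with hx | rfl | hx
  · rw [max_eq_right hx.le, hp1, mul_zero]
    refine (hasDerivAt_const x 0).congr_of_eventuallyEq ?_
    filter_upwards [Iio_mem_nhds hx] with y hy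
    rw [max_eq_right (le_of_lt hy), hp0]
  · rw [max_self, hp1, mul_zero, ← hasDerivWithinAt_univ, ← Iic_union_Ici]
    refine HasDerivWithinAt.union ?_ ?_
    · refine (hasDerivWithinAt_const 0 _ 0).congr (fun y hy => ?_) (by simp [hp0])
      rw [max_eq_right hy, hp0]
    · have h := (hasDerivAt_rpow_const (x := 0) (Or.inr hp.le)).hasDerivWithinAt (s := Ici 0)
      rw [hp1, mul_zero] at h
      exact h.congr (fun y hy => by rw [max_eq_left hy]) (by simp)
  · rw [max_eq_left hx.le]
    refine (hasDerivAt_rpow_const (Or.inl hx.ne')).congr_of_eventuallyEq ?_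
    filter_upwards [Ioi_mem_nhds hx] with y hy
    rw [max_eq_left (mem_Ioi.1 hy).le]

noncomputable def V' (x : ℝ) : ℝ := -max (-x) 0 ^ ((3:ℝ)/2)

theorem hasDerivAt_V' (x : ℝ) : HasDerivAt V' (V'' x) x := by
  have hV'' : V'' x = -((3/2) * max (-x) 0 ^ ((3:ℝ)/2 - 1) * -1) := by
    unfold V''
    norm_num
  rw [hV'']
  exact ((hasDerivAt_max_zero_rpow (by norm_num) (-x)).comp x (hasDerivAt_neg x)).neg

theorem continuous_V' : Continuous V' :=
  continuous_iff_continuousAt.2 fun x => (hasDerivAt_V' x).continuousAt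

theorem V'_eq_zero_of_nonneg {x : ℝ} (hx : 0 ≤ x) : V' x = 0 := by
  rw [V', max_eq_right (by linarith), zero_rpow (by norm_num), neg_zero]

theorem V'_eq_of_nonpos {x : ℝ} (hx : x ≤ 0) : V' x = |x| ^ ((1:ℝ)/2) * x := by
  rw [V', max_eq_left (neg_nonneg.2 hx), ← abs_of_nonpos hx,
    show (3:ℝ)/2 = 1/2 + 1 by norm_num, rpow_add_one' (abs_nonneg x) (by norm_num),
    abs_of_nonpos hx]
  ring

section

variable {φ : ℝ → ℝ}

theorem integral_V'_comp_of_nonneg {a b : ℝ} (hpos : ∀ s ∈ uIcc a b, 0 ≤ φ s) :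
    ∫ s in a..b, V' (φ s) = 0 := by
  rw [integral_congr fun s hs => V'_eq_zero_of_nonneg (hpos s hs), integral_zero]

theorem integral_V'_comp_of_nonpos (hφ : ContDiff ℝ 2 φ)
    (hode : ∀ τ, deriv (deriv φ) τ + |φ τ| ^ ((1:ℝ)/2) * φ τ = 0) {a b : ℝ}
    (hneg : ∀ s ∈ uIcc a b, φ s ≤ 0) :
    ∫ s in a..b, V' (φ s) = deriv φ a - deriv φ b := by
  have hφ' : ContDiff ℝ 1 (deriv φ) := hφ.iterate_deriv' 1 1
  have hφ'' : Continuous (deriv (deriv φ)) := hφ'.continuous_deriv le_rfl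
  have h : EqOn (fun s => V' (φ s)) (fun s => -deriv (deriv φ) s) (uIcc a b) := fun s hs => by
    dsimp only
    rw [V'_eq_of_nonpos (hneg s hs)]
    linarith [hode s]
  rw [integral_congr h, integral_neg, integral_deriv_eq_sub
    (fun s _ => hφ'.differentiable one_ne_zero s) (hφ''.intervalIntegrable a b)]
  ring

theorem integral_V'_comp_of_nonpos_of_nonneg (hφ : ContDiff ℝ 2 φ)
    (hode : ∀ τ, deriv (deriv φ) τ + |φ τ| ^ ((1:ℝ)/2) * φ τ = 0) {a b c : ℝ}
    (hneg : ∀ s ∈ uIcc a b, φ s ≤ 0) (hpos : ∀ s ∈ uIcc b c, 0 ≤ φ s) :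
    ∫ s in a..c, V' (φ s) = deriv φ a - deriv φ b := by
  have hcont : Continuous fun s => V' (φ s) := continuous_V'.comp hφ.continuous
  rw [← integral_add_adjacent_intervals (hcont.intervalIntegrable a b)
      (hcont.intervalIntegrable b c),
    integral_V'_comp_of_nonpos hφ hode hneg, integral_V'_comp_of_nonneg hpos, add_zero]

noncomputable def zPlus (φ : ℝ → ℝ) (τ : ℝ) : ℝ :=
  deriv φ 0 * (τ / π - 1 / 2) + ∫ s in (0:ℝ)..τ, V' (φ s)

theorem hasDerivAt_zPlus (hφ : Continuous φ) (τ : ℝ) :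
    HasDerivAt (zPlus φ) (deriv φ 0 / π + V' (φ τ)) τ := by
  have hlin : HasDerivAt (fun t => deriv φ 0 * (t / π - 1 / 2)) (deriv φ 0 / π) τ :=
    ((((hasDerivAt_id τ).div_const π).sub_const (1 / 2)).const_mul _).congr_deriv (by ring)
  exact hlin.add ((continuous_V'.comp hφ).integral_hasStrictDerivAt 0 τ).hasDerivAt

theorem deriv_zPlus (hφ : Continuous φ) :
    deriv (zPlus φ) = fun τ => deriv φ 0 / π + V' (φ τ) :=
  funext fun τ => (hasDerivAt_zPlus hφ τ).deriv

theorem contDiff_one_zPlus (hφ : Continuous φ) : ContDiff ℝ 1 (zPlus φ) :=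
  contDiff_one_iff_deriv.2 ⟨fun τ => (hasDerivAt_zPlus hφ τ).differentiableAt, by
    rw [deriv_zPlus hφ]
    exact continuous_const.add (continuous_V'.comp hφ)⟩

theorem hasDerivAt_deriv_zPlus (hφ : Differentiable ℝ φ) (τ : ℝ) :
    HasDerivAt (deriv (zPlus φ)) (V'' (φ τ) * deriv φ τ) τ := by
  rw [deriv_zPlus hφ.continuous]
  exact ((hasDerivAt_V' (φ τ)).comp τ (hφ τ).hasDerivAt).const_add _

theorem periodic_zPlus (hφ : Continuous φ) (hper : Periodic φ (2 * π))
    (hmean : ∫ s in (-π)..π, V' (φ s) = -2 * deriv φ 0) :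
    Periodic (zPlus φ) (2 * π) := fun τ => by
  have hg : Periodic (fun s => V' (φ s)) (2 * π) := hper.comp V'
  rw [zPlus, zPlus, hg.intervalIntegral_add_eq_add 0 τ
      fun _ _ => (continuous_V'.comp hφ).intervalIntegrable _ _,
    hg.intervalIntegral_add_eq 0 (-π), show -π + 2 * π = π by ring, hmean]
  field_simp
  ring

theorem zPlus_eq_of_nonneg {τ : ℝ} (hpos : ∀ s ∈ uIcc 0 τ, 0 ≤ φ s) :
    zPlus φ τ = deriv φ 0 * (τ / π - 1 / 2) := by
  rw [zPlus, integral_V'_comp_of_nonneg hpos, add_zero]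

theorem zPlus_eq_of_nonpos (hφ : ContDiff ℝ 2 φ)
    (hode : ∀ τ, deriv (deriv φ) τ + |φ τ| ^ ((1:ℝ)/2) * φ τ = 0) {τ : ℝ}
    (hneg : ∀ s ∈ uIcc τ 0, φ s ≤ 0) :
    zPlus φ τ = deriv φ 0 * (τ / π + 1 / 2) - deriv φ τ := by
  rw [zPlus, integral_symm, integral_V'_comp_of_nonpos hφ hode hneg]
  ring

theorem integral_zPlus_eq_zero (hφ : ContDiff ℝ 2 φ)
    (hode : ∀ τ, deriv (deriv φ) τ + |φ τ| ^ ((1:ℝ)/2) * φ τ = 0)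
    (hneg : ∀ s ∈ uIcc (-π) 0, φ s ≤ 0) (hpos : ∀ s ∈ uIcc 0 π, 0 ≤ φ s)
    (hφπ : φ (-π) = φ 0) :
    ∫ τ in (-π)..π, zPlus φ τ = 0 := by
  have hz := (contDiff_one_zPlus (φ := φ) hφ.continuous).continuous
  have hφ' : Continuous (deriv φ) := hφ.continuous_deriv one_le_two
  have hlin_left : ∫ τ in (-π)..0, (τ / π + 1 / 2) = 0 := by
    rw [integral_add (intervalIntegrable_id.div_const _) intervalIntegrable_const, integral_div,
      integral_id, integral_const, smul_eq_mul]
    field_simp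
    ring
  have hlin_right : ∫ τ in (0:ℝ)..π, (τ / π - 1 / 2) = 0 := by
    rw [integral_sub (intervalIntegrable_id.div_const _) intervalIntegrable_const, integral_div,
      integral_id, integral_const, smul_eq_mul]
    field_simp
    ring
  have hleft : ∫ τ in (-π)..0, zPlus φ τ = 0 := by
    rw [integral_congr fun τ hτ =>
        zPlus_eq_of_nonpos hφ hode fun s hs => hneg s (uIcc_subset_uIcc_right hτ hs),
      integral_sub ((intervalIntegrable_id.div_const _).add intervalIntegrable_const |>.const_mul _)
        (hφ'.intervalIntegrable _ _),
      integral_const_mul, hlin_left, integral_deriv_eq_sub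
        (fun s _ => hφ.differentiable two_ne_zero s) (hφ'.intervalIntegrable _ _), hφπ]
    ring
  have hright : ∫ τ in (0:ℝ)..π, zPlus φ τ = 0 := by
    rw [integral_congr fun τ hτ =>
      zPlus_eq_of_nonneg fun s hs => hpos s (uIcc_subset_uIcc_left hτ hs),
      integral_const_mul, hlin_right, mul_zero]
  rw [← integral_add_adjacent_intervals (hz.intervalIntegrable _ 0) (hz.intervalIntegrable 0 _),
    hleft, hright, add_zero]

end

/-- The explicit zero-mean 2π-periodic solution `z₊` of `z̈ = V''(φ)φ̇`
(formula (sol-3-plus) in Lemma 2 of the paper). -/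
theorem explicit_solution_z_plus
    (φ : ℝ → ℝ) (hφ : ContDiff ℝ 3 φ)
    (hper : Function.Periodic φ (2 * π))
    (hode : ∀ τ, deriv (deriv φ) τ + |φ τ| ^ ((1:ℝ)/2) * φ τ = 0)
    (hodd : ∀ τ, φ (-τ) = -φ τ)
    (hanti : ∀ τ, φ (τ + π) = -φ τ)
    (hpos : ∀ τ ∈ Set.Icc (0:ℝ) π, 0 ≤ φ τ) :
    ∃ z : ℝ → ℝ,
      Function.Periodic z (2 * π) ∧
      (∀ τ ∈ Set.Icc (-π) (0:ℝ),
        z τ = (1/(2 * π)) * (deriv φ 0 * (2 * τ + π) - 2 * π * deriv φ τ)) ∧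
      (∀ τ ∈ Set.Icc (0:ℝ) π,
        z τ = (1/(2 * π)) * (deriv φ 0 * (2 * τ - π))) ∧
      ContDiff ℝ 1 z ∧
      (∫ τ in (-π)..π, z τ) = 0 ∧
      (∀ τ, HasDerivAt (deriv z) (V'' (φ τ) * deriv φ τ) τ) := by
  have hφ2 : ContDiff ℝ 2 φ := hφ.of_le (by norm_num)
  have hφ0 : φ 0 = 0 := by linarith [neg_zero (G := ℝ) ▸ hodd 0]
  have hφπ : φ (-π) = φ 0 := by linarith [neg_add_cancel π ▸ hanti (-π)]
  have hpos' : ∀ τ ∈ uIcc 0 π, 0 ≤ φ τ := by rwa [uIcc_of_le pi_pos.le]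
  have hneg : ∀ τ ∈ uIcc (-π) 0, φ τ ≤ 0 := fun τ hτ => by
    rw [uIcc_of_le (by linarith [pi_pos])] at hτ
    linarith [hodd τ ▸ hpos (-τ) ⟨by linarith [hτ.2], by linarith [hτ.1]⟩]
  have hφ'π : deriv φ (-π) = -deriv φ 0 := by
    linarith [neg_add_cancel π ▸ Antiperiodic.deriv hanti (-π)]
  have hmean : ∫ s in (-π)..π, V' (φ s) = -2 * deriv φ 0 := by
    rw [integral_V'_comp_of_nonpos_of_nonneg hφ2 hode hneg hpos', hφ'π]
    ring
  refine ⟨zPlus φ, periodic_zPlus hφ2.continuous hper hmean, fun τ hτ => ?_, fun τ hτ => ?_,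
    contDiff_one_zPlus hφ2.continuous, integral_zPlus_eq_zero hφ2 hode hneg hpos' hφπ,
    hasDerivAt_deriv_zPlus (hφ2.differentiable (by norm_num))⟩
  · rw [zPlus_eq_of_nonpos hφ2 hode fun s hs =>
      hneg s (uIcc_subset_uIcc_right (Icc_subset_uIcc hτ) hs)]
    field_simp
  · rw [zPlus_eq_of_nonneg fun s hs =>
      hpos' s (uIcc_subset_uIcc_left (Icc_subset_uIcc hτ) hs)]
    field_simp
end

section
/- Let φ : ℝ → ℝ be a C³, 2π-periodic solution of φ̈ + |φ|^{1/2}φ = 0 that is odd, satisfies φ(τ+π) = −φ(τ), φ(τ) ≥ 0 on [0,π], and φ̇(τ) ≥ 0 on [0,π/2]. Define I(q) := −∫_{π−2q}^{π} φ̈(τ)φ̈(τ+2q)dτ for q ∈ [0,π/2]. Then I(0) = 0, I(q) ≥ 0 for all q ∈ [0,π/2], I is continuously differentiable on [0,π/2] with I'(q) ≥ 0 (so I is nondecreasing), and I(π/2) = ∫₀^{π} (φ̈(τ))² dτ. -/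
/-!
Write `ψ = |φ|^{1/2} φ`, so that `φ̈ = -ψ`. Oddness and `φ(τ + π) = -φ(τ)` give `φ(π - τ) = φ(τ)`
and turn `I(q)` into `J(2q)`, where `J(c) = ∫₀^c ψ(s) ψ(c - s) ds` is nonnegative since `ψ ≥ 0`
on `[0, π]`. By the Leibniz rule and `ψ(0) = 0`, `J'(c) = ∫₀^c ψ(s) ψ̇(c - s) ds`. Symmetrizing
under `s ↦ c - s`, the integrand becomes `(3/2) |φ(s) φ(c - s)|^{1/2}` times
`φ(s) φ̇(c - s) + φ(c - s) φ̇(s)`. This is nonnegative: trivially if `s, c - s ≤ π/2`, and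
otherwise, after reflecting `c - s` to `b = π - (c - s) ∈ [s, π/2]`, by the Wronskian inequality
`φ(s) φ̇(b) ≤ φ(b) φ̇(s)`, valid because `φ ≥ 0` is increasing and concave on `[0, π/2]`.
-/

open Real Set Filter Topology MeasureTheory intervalIntegral

section ParametricIntegral

variable {F F' : ℝ → ℝ → ℝ}

theorem hasDerivAt_intervalIntegral_of_continuous_deriv
    (hF : Continuous (Function.uncurry F)) (hF' : Continuous (Function.uncurry F'))
    (hderiv : ∀ x t, HasDerivAt (F · t) (F' x t) x) (a b x₀ : ℝ) :
    HasDerivAt (fun x => ∫ t in a..b, F x t) (∫ t in a..b, F' x₀ t) x₀ := by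
  obtain ⟨C, hC⟩ := ((isCompact_closedBall x₀ 1).prod isCompact_uIcc).exists_bound_of_continuousOn
    hF'.continuousOn
  refine (hasDerivAt_integral_of_dominated_loc_of_deriv_le (bound := fun _ => C)
    (Metric.ball_mem_nhds x₀ one_pos)
    (Eventually.of_forall fun x => (hF.comp (Continuous.prodMk_right x)).aestronglyMeasurable)
    ((hF.comp (Continuous.prodMk_right x₀)).intervalIntegrable a b)
    (hF'.comp (Continuous.prodMk_right x₀)).aestronglyMeasurable ?_ intervalIntegrable_const
    (ae_of_all _ fun t _ x _ => hderiv x t)).2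
  exact ae_of_all _ fun t ht x hx =>
    hC (x, t) ⟨Metric.ball_subset_closedBall hx, uIoc_subset_uIcc ht⟩

theorem hasDerivAt_intervalIntegral_upper_param
    (hF : Continuous (Function.uncurry F)) (hF' : Continuous (Function.uncurry F'))
    (hderiv : ∀ x t, HasDerivAt (F · t) (F' x t) x) (a x₀ : ℝ) :
    HasDerivAt (fun x => ∫ t in a..x, F x t) (F x₀ x₀ + ∫ t in a..x₀, F' x₀ t) x₀ := by
  have hH := hasStrictFDerivAt_uncurry_coprod (u := (x₀, x₀))
    (f := fun x u => ∫ t in a..u, F x t)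
    (f₁ := fun x u => ContinuousLinearMap.toSpanSingleton ℝ (∫ t in a..u, F' x t))
    (f₂ := fun x u => ContinuousLinearMap.toSpanSingleton ℝ (F x u))
    (Eventually.of_forall fun v =>
      (hasDerivAt_intervalIntegral_of_continuous_deriv hF hF' hderiv a v.2 v.1).hasFDerivAt)
    (Eventually.of_forall fun v =>
      ((hF.comp (Continuous.prodMk_right v.1)).integral_hasStrictDerivAt a v.2).hasDerivAt
        |>.hasFDerivAt)
    (ContinuousLinearMap.toSpanSingletonCLE.continuous.comp
      (by fun_prop : Continuous fun v : ℝ × ℝ => ∫ t in a..v.2, F' v.1 t)).continuousAt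
    (ContinuousLinearMap.toSpanSingletonCLE.continuous.comp hF).continuousAt
  refine (hH.hasFDerivAt.comp_hasDerivAt (f := fun x => (x, x)) x₀
    ((hasDerivAt_id x₀).prodMk (hasDerivAt_id x₀))).congr_deriv ?_
  simp [Function.HasUncurry.uncurry, add_comm]

end ParametricIntegral

theorem hasDerivAt_abs_rpow_mul_self {p : ℝ} (hp : 0 < p) (x : ℝ) :
    HasDerivAt (fun y : ℝ => |y| ^ p * y) ((p + 1) * |x| ^ p) x := by
  have of_pos : ∀ x : ℝ, 0 < x → HasDerivAt (fun y : ℝ => |y| ^ p * y) ((p + 1) * |x| ^ p) x := by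
    intro x hx
    refine ((hasDerivAt_rpow_const (p := p + 1) (Or.inl hx.ne')).congr_of_eventuallyEq
      ?_).congr_deriv (by rw [abs_of_pos hx, add_sub_cancel_right])
    filter_upwards [eventually_gt_nhds hx] with y hy
    rw [abs_of_pos hy, rpow_add_one hy.ne']
  rcases lt_trichotomy x 0 with hx | rfl | hx
  · refine ((((of_pos (-x) (neg_pos.2 hx)).comp x (hasDerivAt_neg x)).neg).congr_of_eventuallyEq
      (.of_forall fun y => ?_)).congr_deriv ?_ <;> simp
  · rw [hasDerivAt_iff_tendsto_slope]
    have hcont : Tendsto (fun y : ℝ => |y| ^ p) (𝓝 0) (𝓝 ((p + 1) * |0| ^ p)) := by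
      have := ((continuous_abs.rpow_const fun _ => Or.inr hp.le).tendsto 0)
      simpa [zero_rpow hp.ne'] using this
    refine (hcont.mono_left nhdsWithin_le_nhds).congr' ?_
    filter_upwards [self_mem_nhdsWithin] with y (hy : y ≠ 0)
    simp [slope_def_field, hy]
  · exact of_pos x hx

theorem integral_mul_comp_sub_comm (f g : ℝ → ℝ) (c : ℝ) :
    ∫ s in 0..c, f s * g (c - s) = ∫ s in 0..c, f (c - s) * g s := by
  simpa using (integral_comp_sub_left (fun s => f (c - s) * g s) c (a := 0) (b := c))

theorem hasDerivAt_integral_mul_comp_sub {f g g' : ℝ → ℝ} (hf : Continuous f)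
    (hg : ∀ x, HasDerivAt g (g' x) x) (hg' : Continuous g') (c : ℝ) :
    HasDerivAt (fun c => ∫ s in 0..c, f s * g (c - s))
      (f c * g 0 + ∫ s in 0..c, f s * g' (c - s)) c := by
  have hderiv : ∀ x t, HasDerivAt (fun x => f t * g (x - t)) (f t * g' (x - t)) x := fun x t => by
    simpa using ((hg (x - t)).comp x ((hasDerivAt_id x).sub_const t)).const_mul (f t)
  have hgc : Continuous g := continuous_iff_continuousAt.2 fun x => (hg x).continuousAt
  simpa using hasDerivAt_intervalIntegral_upper_param (F := fun x t => f t * g (x - t))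
    (by fun_prop) (F' := fun x t => f t * g' (x - t)) (by fun_prop) hderiv 0 c

theorem apply_sub_eq_of_odd_of_antiperiodic {f : ℝ → ℝ} {T : ℝ} (hodd : Function.Odd f)
    (hanti : Function.Antiperiodic f T) (x : ℝ) : f (T - x) = f x := by
  rw [hanti.sub_eq', hodd, neg_neg]

theorem integral_mul_shift_eq_neg_integral_mul_comp_sub {f : ℝ → ℝ} {T : ℝ}
    (hodd : Function.Odd f) (hanti : Function.Antiperiodic f T) (c : ℝ) :
    ∫ τ in (T - c)..T, f τ * f (τ + c) = -∫ s in 0..c, f s * f (c - s) := by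
  have h := integral_comp_add_right (fun τ => f τ * f (τ + c)) (T - c) (a := 0) (b := c)
  rw [zero_add, add_sub_cancel] at h
  rw [← h, ← intervalIntegral.integral_neg]
  refine integral_congr fun s _ => ?_
  rw [show s + (T - c) + c = s + T by ring, hanti, show s + (T - c) = T - (c - s) by ring,
    apply_sub_eq_of_odd_of_antiperiodic hodd hanti]
  ring

theorem deriv_sub_eq_neg_of_apply_sub_eq {f : ℝ → ℝ} {c : ℝ} (h : ∀ x, f (c - x) = f x)
    (x : ℝ) : deriv f (c - x) = -deriv f x := by
  have := deriv_comp_const_sub (f := f) (a := c) (x := x)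
  simp only [h] at this
  linarith

theorem mul_deriv_le_mul_deriv_of_concave {f : ℝ → ℝ} {s b : ℝ} (hf : ContDiff ℝ 2 f)
    (hsb : s ≤ b) (hfs : 0 ≤ f s) (hmono : ∀ t ∈ Icc s b, 0 ≤ deriv f t)
    (hconc : ∀ t ∈ Icc s b, deriv (deriv f) t ≤ 0) :
    f s * deriv f b ≤ f b * deriv f s := by
  set K : ℝ → ℝ := fun t => f t * deriv f s - f s * deriv f t
  have hK : ∀ t, HasDerivAt K (deriv f t * deriv f s - f s * deriv (deriv f) t) t := fun t =>
    ((hf.differentiable two_ne_zero t).hasDerivAt.mul_const _).sub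
      ((hf.differentiable_deriv_two t).hasDerivAt.const_mul _)
  have hKmono : MonotoneOn K (Icc s b) := by
    refine monotoneOn_of_hasDerivWithinAt_nonneg (convex_Icc s b)
      (fun t _ => (hK t).continuousAt.continuousWithinAt) (fun t _ => (hK t).hasDerivWithinAt)
      fun t ht => ?_
    have ht := interior_subset ht
    nlinarith [hmono t ht, hmono s (left_mem_Icc.2 hsb), hconc t ht]
  have := hKmono (left_mem_Icc.2 hsb) (right_mem_Icc.2 hsb) hsb
  simp only [K, sub_self] at this
  linarith

section RestoringForce

variable {p : ℝ} {φ : ℝ → ℝ}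

noncomputable def restoringForce (p : ℝ) (φ : ℝ → ℝ) (τ : ℝ) : ℝ := |φ τ| ^ p * φ τ

theorem hasDerivAt_restoringForce (hp : 0 < p) {τ : ℝ} (hφ : DifferentiableAt ℝ φ τ) :
    HasDerivAt (restoringForce p φ) ((p + 1) * |φ τ| ^ p * deriv φ τ) τ :=
  (hasDerivAt_abs_rpow_mul_self hp (φ τ)).comp τ hφ.hasDerivAt

theorem differentiable_restoringForce (hp : 0 < p) (hφ : Differentiable ℝ φ) :
    Differentiable ℝ (restoringForce p φ) :=
  fun τ => (hasDerivAt_restoringForce hp (hφ τ)).differentiableAt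

theorem deriv_restoringForce (hp : 0 < p) (hφ : Differentiable ℝ φ) :
    deriv (restoringForce p φ) = fun τ => (p + 1) * |φ τ| ^ p * deriv φ τ :=
  funext fun τ => (hasDerivAt_restoringForce hp (hφ τ)).deriv

theorem continuous_restoringForce (hp : 0 ≤ p) (hφ : Continuous φ) :
    Continuous (restoringForce p φ) :=
  (hφ.abs.rpow_const fun _ => Or.inr hp).mul hφ

theorem continuous_deriv_restoringForce (hp : 0 < p) (hφ : ContDiff ℝ 1 φ) :
    Continuous (deriv (restoringForce p φ)) := by
  rw [deriv_restoringForce hp (hφ.differentiable one_ne_zero)]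
  exact (continuous_const.mul (hφ.continuous.abs.rpow_const fun _ => Or.inr hp.le)).mul
    (hφ.continuous_deriv le_rfl)

theorem restoringForce_odd (hodd : Function.Odd φ) : Function.Odd (restoringForce p φ) :=
  fun τ => by simp [restoringForce, hodd τ]

theorem restoringForce_antiperiodic {T : ℝ} (hanti : Function.Antiperiodic φ T) :
    Function.Antiperiodic (restoringForce p φ) T :=
  fun τ => by simp [restoringForce, hanti τ]

theorem restoringForce_nonneg {τ : ℝ} (h : 0 ≤ φ τ) : 0 ≤ restoringForce p φ τ :=
  mul_nonneg (rpow_nonneg (abs_nonneg _) _) h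

end RestoringForce

section Oscillator

variable {p : ℝ} {φ : ℝ → ℝ}

theorem mul_deriv_sub_add_mul_deriv_nonneg (hφ : ContDiff ℝ 2 φ)
    (hode : ∀ τ, deriv (deriv φ) τ + restoringForce p φ τ = 0)
    (hodd : Function.Odd φ) (hanti : Function.Antiperiodic φ π)
    (hpos : ∀ τ ∈ Icc 0 π, 0 ≤ φ τ) (hder : ∀ τ ∈ Icc 0 (π / 2), 0 ≤ deriv φ τ)
    {s c : ℝ} (hs : 0 ≤ s) (hsc : s ≤ c) (hc : c ≤ π) :
    0 ≤ φ s * deriv φ (c - s) + φ (c - s) * deriv φ s := by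
  wlog hs2 : 2 * s ≤ c generalizing s
  · have := this (s := c - s) (by linarith) (by linarith) (by linarith)
    rwa [sub_sub_cancel, add_comm] at this
  by_cases hcs : c - s ≤ π / 2
  · exact add_nonneg (mul_nonneg (hpos s ⟨hs, by linarith⟩) (hder _ ⟨by linarith, hcs⟩))
      (mul_nonneg (hpos _ ⟨by linarith, by linarith⟩) (hder s ⟨hs, by linarith⟩))
  · have hsymm := apply_sub_eq_of_odd_of_antiperiodic hodd hanti
    set b := π - (c - s)
    have hb : c - s = π - b := by ring
    rw [hb, hsymm, deriv_sub_eq_neg_of_apply_sub_eq hsymm]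
    have := mul_deriv_le_mul_deriv_of_concave hφ (s := s) (b := b) (by linarith)
      (hpos s ⟨hs, by linarith⟩) (fun t ht => hder t ⟨by linarith [ht.1], by linarith [ht.2]⟩)
      fun t ht => by
        have hφt := hpos t ⟨by linarith [ht.1], by linarith [ht.2]⟩
        linarith [hode t, restoringForce_nonneg (p := p) hφt]
    linarith

theorem integral_restoringForce_mul_deriv_nonneg (hp : 0 < p) (hφ : ContDiff ℝ 2 φ)
    (hode : ∀ τ, deriv (deriv φ) τ + restoringForce p φ τ = 0)
    (hodd : Function.Odd φ) (hanti : Function.Antiperiodic φ π)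
    (hpos : ∀ τ ∈ Icc 0 π, 0 ≤ φ τ) (hder : ∀ τ ∈ Icc 0 (π / 2), 0 ≤ deriv φ τ)
    {c : ℝ} (hc0 : 0 ≤ c) (hc : c ≤ π) :
    0 ≤ ∫ s in 0..c, restoringForce p φ s * deriv (restoringForce p φ) (c - s) := by
  have hψ := continuous_restoringForce hp.le hφ.continuous
  have hψ' := continuous_deriv_restoringForce hp (hφ.of_le one_le_two)
  set ψ := restoringForce p φ
  have hsum : 0 ≤ ∫ s in 0..c, (ψ s * deriv ψ (c - s) + ψ (c - s) * deriv ψ s) := by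
    refine integral_nonneg hc0 fun s hs => ?_
    have hfactor : ψ s * deriv ψ (c - s) + ψ (c - s) * deriv ψ s = (p + 1) * |φ s| ^ p *
        |φ (c - s)| ^ p * (φ s * deriv φ (c - s) + φ (c - s) * deriv φ s) := by
      simp only [ψ, restoringForce, deriv_restoringForce hp (hφ.differentiable two_ne_zero)]
      ring
    rw [hfactor]
    exact mul_nonneg (by positivity)
      (mul_deriv_sub_add_mul_deriv_nonneg hφ hode hodd hanti hpos hder hs.1 hs.2 hc)
  rw [intervalIntegral.integral_add (Continuous.intervalIntegrable (by fun_prop) _ _)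
    (Continuous.intervalIntegrable (by fun_prop) _ _), ← integral_mul_comp_sub_comm] at hsum
  linarith

theorem neg_integral_deriv2_mul_shift_eq (hode : ∀ τ, deriv (deriv φ) τ + restoringForce p φ τ = 0)
    (hodd : Function.Odd φ) (hanti : Function.Antiperiodic φ π) (c : ℝ) :
    -(∫ τ in (π - c)..π, deriv (deriv φ) τ * deriv (deriv φ) (τ + c)) =
      ∫ s in 0..c, restoringForce p φ s * restoringForce p φ (c - s) := by
  simp only [fun τ => eq_neg_of_add_eq_zero_left (hode τ), neg_mul_neg]
  rw [integral_mul_shift_eq_neg_integral_mul_comp_sub (restoringForce_odd hodd)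
    (restoringForce_antiperiodic hanti), neg_neg]

end Oscillator

theorem properties_of_I_general
    (φ : ℝ → ℝ) (hφ : ContDiff ℝ 3 φ)
    (hode : ∀ τ, deriv (deriv φ) τ + |φ τ| ^ ((1:ℝ)/2) * φ τ = 0)
    (hodd : ∀ τ, φ (-τ) = -φ τ)
    (hanti : ∀ τ, φ (τ + π) = -φ τ)
    (hpos : ∀ τ ∈ Set.Icc (0:ℝ) π, 0 ≤ φ τ)
    (hder : ∀ τ ∈ Set.Icc (0:ℝ) (π/2), 0 ≤ deriv φ τ) :
    (-(∫ τ in (π - 2 * (0:ℝ))..π,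
        deriv (deriv φ) τ * deriv (deriv φ) (τ + 2 * (0:ℝ)))) = 0 ∧
    (∀ q ∈ Set.Icc (0:ℝ) (π/2),
      0 ≤ -(∫ τ in (π - 2 * q)..π,
        deriv (deriv φ) τ * deriv (deriv φ) (τ + 2 * q))) ∧
    (∃ I' : ℝ → ℝ, ContinuousOn I' (Set.Icc 0 (π/2)) ∧
      (∀ q ∈ Set.Icc (0:ℝ) (π/2),
        HasDerivWithinAt (fun q : ℝ =>
            -(∫ τ in (π - 2 * q)..π,
              deriv (deriv φ) τ * deriv (deriv φ) (τ + 2 * q)))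
          (I' q) (Set.Icc 0 (π/2)) q) ∧
      (∀ q ∈ Set.Icc (0:ℝ) (π/2), 0 ≤ I' q)) ∧
    MonotoneOn (fun q : ℝ =>
        -(∫ τ in (π - 2 * q)..π,
          deriv (deriv φ) τ * deriv (deriv φ) (τ + 2 * q)))
      (Set.Icc 0 (π/2)) ∧
    (-(∫ τ in (π - 2 * (π/2))..π,
        deriv (deriv φ) τ * deriv (deriv φ) (τ + 2 * (π/2))))
      = ∫ τ in (0:ℝ)..π, (deriv (deriv φ) τ) ^ 2 := by
  have hp : (0 : ℝ) < 1 / 2 := by norm_num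
  have hφ2 : ContDiff ℝ 2 φ := hφ.of_le (by norm_num)
  have hψ := continuous_restoringForce hp.le hφ.continuous
  have hψ' := continuous_deriv_restoringForce hp (hφ.of_le (by norm_num))
  have hψdiff := differentiable_restoringForce hp (hφ2.differentiable two_ne_zero)
  set ψ := restoringForce (1 / 2) φ
  have hode' : ∀ τ, deriv (deriv φ) τ + ψ τ = 0 := hode
  have hI (q : ℝ) := neg_integral_deriv2_mul_shift_eq hode hodd hanti (2 * q)
  set I' : ℝ → ℝ := fun q => 2 * ∫ s in 0..2 * q, ψ s * deriv ψ (2 * q - s)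
  have hasDerivAt_I (q : ℝ) :
      HasDerivAt (fun q => ∫ s in 0..2 * q, ψ s * ψ (2 * q - s)) (I' q) q := by
    refine ((hasDerivAt_integral_mul_comp_sub hψ (fun x => (hψdiff x).hasDerivAt) hψ' (2 * q)).comp
      q ((hasDerivAt_id q).const_mul 2)).congr_deriv ?_
    have hψ0 : ψ 0 = 0 := (restoringForce_odd hodd).map_zero
    simp [I', hψ0, mul_comm]
  have hI'_nonneg (q : ℝ) (hq : q ∈ Icc 0 (π / 2)) : 0 ≤ I' q :=
    mul_nonneg zero_le_two (integral_restoringForce_mul_deriv_nonneg hp hφ2 hode hodd hanti hpos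
      hder (by linarith [hq.1]) (by linarith [hq.2]))
  simp only [hI]
  refine ⟨by simp, fun q hq => ?_, ⟨I', by fun_prop, fun q _ => (hasDerivAt_I q).hasDerivWithinAt,
    hI'_nonneg⟩, ?_, ?_⟩
  · exact integral_nonneg (by linarith [hq.1]) fun s hs =>
      mul_nonneg (restoringForce_nonneg (hpos s ⟨hs.1, by linarith [hs.2, hq.2]⟩))
        (restoringForce_nonneg (hpos _ ⟨by linarith [hs.2], by linarith [hs.1, hq.2]⟩))
  · exact monotoneOn_of_hasDerivWithinAt_nonneg (convex_Icc _ _)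
      (fun q _ => (hasDerivAt_I q).continuousAt.continuousWithinAt)
      (fun q _ => (hasDerivAt_I q).hasDerivWithinAt) fun q hq => hI'_nonneg q (interior_subset hq)
  · rw [show 2 * (π / 2) = π by ring]
    refine integral_congr fun τ _ => ?_
    simp only [apply_sub_eq_of_odd_of_antiperiodic (restoringForce_odd hodd)
      (restoringForce_antiperiodic hanti), eq_neg_of_add_eq_zero_left (hode' τ)]
    ring

/-- Properties of `I(q) = -∫_{π-2q}^{π} φ̈(τ)φ̈(τ+2q) dτ` on `[0, π/2]`:
it vanishes at 0, is nonnegative, is C¹ with nonnegative derivative (hence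
nondecreasing), and `I(π/2) = ∫₀^π φ̈²`. -/
theorem properties_of_I
    (φ : ℝ → ℝ) (hφ : ContDiff ℝ 3 φ)
    (hper : Function.Periodic φ (2 * π))
    (hode : ∀ τ, deriv (deriv φ) τ + |φ τ| ^ ((1:ℝ)/2) * φ τ = 0)
    (hodd : ∀ τ, φ (-τ) = -φ τ)
    (hanti : ∀ τ, φ (τ + π) = -φ τ)
    (hpos : ∀ τ ∈ Set.Icc (0:ℝ) π, 0 ≤ φ τ)
    (hder : ∀ τ ∈ Set.Icc (0:ℝ) (π/2), 0 ≤ deriv φ τ) :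
    (-(∫ τ in (π - 2 * (0:ℝ))..π,
        deriv (deriv φ) τ * deriv (deriv φ) (τ + 2 * (0:ℝ)))) = 0 ∧
    (∀ q ∈ Set.Icc (0:ℝ) (π/2),
      0 ≤ -(∫ τ in (π - 2 * q)..π,
        deriv (deriv φ) τ * deriv (deriv φ) (τ + 2 * q))) ∧
    (∃ I' : ℝ → ℝ, ContinuousOn I' (Set.Icc 0 (π/2)) ∧
      (∀ q ∈ Set.Icc (0:ℝ) (π/2),
        HasDerivWithinAt (fun q : ℝ =>
            -(∫ τ in (π - 2 * q)..π,
              deriv (deriv φ) τ * deriv (deriv φ) (τ + 2 * q)))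
          (I' q) (Set.Icc 0 (π/2)) q) ∧
      (∀ q ∈ Set.Icc (0:ℝ) (π/2), 0 ≤ I' q)) ∧
    MonotoneOn (fun q : ℝ =>
        -(∫ τ in (π - 2 * q)..π,
          deriv (deriv φ) τ * deriv (deriv φ) (τ + 2 * q)))
      (Set.Icc 0 (π/2)) ∧
    (-(∫ τ in (π - 2 * (π/2))..π,
        deriv (deriv φ) τ * deriv (deriv φ) (τ + 2 * (π/2))))
      = ∫ τ in (0:ℝ)..π, (deriv (deriv φ) τ) ^ 2 :=
  properties_of_I_general φ hφ hode hodd hanti hpos hder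
end
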